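/- Let χ = (χ¹,χ²): 𝕋²×ℝ^{2K} → ℝ² be continuous, twice continuously differentiable in the y-variable, such that for every η ∈ ℝ^{2K} and i ∈ {1,2}: L_0(η)χ^i(·,η) = −F^i(·,η) on 𝕋², and suppose |χ(y,η)| ≤ C(1+|η|^m) for some constants C, m > 0. Then for all i, j ∈ {1,2}: ∫_{ℝ^{2K}} ∫_{𝕋²} (χ^i(y,η) F^j(y,η) − F^i(y,η) χ^j(y,η)) ρ_Y(dy,η) ρ_η(dη) = 0; i.e. the Stratonovich area-correction matrix Ã(i,j) = ∫∫ χ^i F^j dρ_Y dρ_η − ∫∫ F^i χ^j dρ_Y dρ_η vanishes. -/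

import Mathlib

open MeasureTheory ProbabilityTheory Real Finset Matrix

noncomputable section

/-- The set of Fourier modes `k ∈ ℤ²` with `0 < |k| ≤ K̃`. -/
def modes (Kt : ℕ) : Finset (ℤ × ℤ) :=
  ((Finset.Icc (-(Kt : ℤ)) (Kt : ℤ)) ×ˢ (Finset.Icc (-(Kt : ℤ)) (Kt : ℤ))).filter
    (fun k => k ≠ (0, 0) ∧ k.1 ^ 2 + k.2 ^ 2 ≤ (Kt : ℤ) ^ 2)

/-- Index set for the real coordinates of `η`: one copy of the modes for the real parts
(`false`) and one for the imaginary parts (`true`); it has cardinality `2K`. -/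
abbrev ModeIdx (Kt : ℕ) := {k : ℤ × ℤ // k ∈ modes Kt} × Bool

/-- The state space `ℝ^{2K}` of the Ornstein-Uhlenbeck process. -/
abbrev EtaSpace (Kt : ℕ) := ModeIdx Kt → ℝ

/-- Euclidean norm of a vector. -/
def euclNorm {ι : Type*} [Fintype ι] (v : ι → ℝ) : ℝ := Real.sqrt (∑ i, (v i) ^ 2)

/-- `|k|` for `k ∈ ℤ²`. -/
def znorm (k : ℤ × ℤ) : ℝ := Real.sqrt ((k.1 : ℝ) ^ 2 + (k.2 : ℝ) ^ 2)

/-- `Γ_k = (κ*|2πk|⁴ + σ*|2πk|²)/|2πk|`. -/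
def GammaVal (κ σ : ℝ) (k : ℤ × ℤ) : ℝ :=
  (κ * (2 * π * znorm k) ^ 4 + σ * (2 * π * znorm k) ^ 2) / (2 * π * znorm k)

/-- `Π_k = (κ*|2πk|⁴ + σ*|2πk|²)⁻¹`. -/
def PiVal (κ σ : ℝ) (k : ℤ × ℤ) : ℝ :=
  (κ * (2 * π * znorm k) ^ 4 + σ * (2 * π * znorm k) ^ 2)⁻¹

/-- The diagonal drift matrix `Γ`. -/
def GammaMat (Kt : ℕ) (κ σ : ℝ) : Matrix (ModeIdx Kt) (ModeIdx Kt) ℝ :=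
  Matrix.diagonal fun i => GammaVal κ σ i.1.1

/-- The diagonal covariance matrix `Π`. -/
def PiMat (Kt : ℕ) (κ σ : ℝ) : Matrix (ModeIdx Kt) (ModeIdx Kt) ℝ :=
  Matrix.diagonal fun i => PiVal κ σ i.1.1

/-- The Gaussian measure `ρ_η = N(0,Π)` on `ℝ^{2K}`; since `Π` is diagonal it is the
product of the one-dimensional Gaussians `N(0, Π_k)`. -/
def rhoEta (Kt : ℕ) (κ σ : ℝ) : Measure (EtaSpace Kt) :=
  Measure.pi fun i => gaussianReal 0 (Real.toNNReal (PiVal κ σ i.1.1))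

/-- Partial derivative `∂_i f(x)` of a function on a finite-dimensional coordinate space. -/
def pd {ι : Type*} [Fintype ι] [DecidableEq ι] (i : ι) (f : (ι → ℝ) → ℝ) (x : ι → ℝ) : ℝ :=
  fderiv ℝ f x (Pi.single i 1)

/-- The Ornstein-Uhlenbeck generator `L_η u = -Γη·∇u + ∑_{i,j} (ΠΓ)_{ij} ∂_i∂_j u`. -/
def OUGen (Kt : ℕ) (κ σ : ℝ) (u : EtaSpace Kt → ℝ) (η : EtaSpace Kt) : ℝ :=
  -(dotProduct ((GammaMat Kt κ σ).mulVec η) fun i => pd i u η)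
    + ∑ i, ∑ j, (PiMat Kt κ σ * GammaMat Kt κ σ) i j * pd i (pd j u) η

/-- The Lebesgue adjoint `L_η* u = ∇·(Γη u) + ∑_{i,j} (ΓΠ)_{ij} ∂_i∂_j u`. -/
def OUGenStar (Kt : ℕ) (κ σ : ℝ) (u : EtaSpace Kt → ℝ) (η : EtaSpace Kt) : ℝ :=
  (∑ i, pd i (fun ξ => ((GammaMat Kt κ σ).mulVec ξ) i * u ξ) η)
    + ∑ i, ∑ j, (GammaMat Kt κ σ * PiMat Kt κ σ) i j * pd i (pd j u) η

/-- The density `f(η) = ((2π)^{2K} det Π)^{-1/2} exp(-η·Π⁻¹η/2)` of `N(0,Π)`. -/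
def gaussDens (Kt : ℕ) (κ σ : ℝ) (η : EtaSpace Kt) : ℝ :=
  ((2 * π) ^ (Fintype.card (ModeIdx Kt)) * (PiMat Kt κ σ).det) ^ (-(1 : ℝ) / 2) *
    Real.exp (-(1 / 2) * dotProduct η ((PiMat Kt κ σ)⁻¹.mulVec η))

/-- The height function `h(x,η) = ∑_{0<|k|≤K̃} η^k e^{2πi k·x}` (real-valued under the
conjugation constraint, here realized as the real part), where the complex coefficient
`η^k` is reconstructed from the real vector `η` as `η(k,false) + i·η(k,true)`. -/
def hFun (Kt : ℕ) (η : EtaSpace Kt) (x : Fin 2 → ℝ) : ℝ :=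
  (∑ k : {k : ℤ × ℤ // k ∈ modes Kt},
      ((η (k, false) : ℂ) + (η (k, true) : ℂ) * Complex.I) *
        Complex.exp (2 * (π : ℂ) * Complex.I *
          ((k.1.1 : ℂ) * (x 0 : ℂ) + (k.1.2 : ℂ) * (x 1 : ℂ)))).re

/-- The gradient `∇_x h(x,η)`. -/
def gradH (Kt : ℕ) (η : EtaSpace Kt) (x : Fin 2 → ℝ) : Fin 2 → ℝ :=
  fun i => pd i (hFun Kt η) x

/-- The metric tensor `g(x,η) = I + ∇_x h ⊗ ∇_x h`. -/
def metricG (Kt : ℕ) (η : EtaSpace Kt) (x : Fin 2 → ℝ) : Matrix (Fin 2) (Fin 2) ℝ :=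
  1 + Matrix.of fun i j => gradH Kt η x i * gradH Kt η x j

/-- `Σ(x,η) = g(x,η)⁻¹`. -/
def SigMat (Kt : ℕ) (η : EtaSpace Kt) (x : Fin 2 → ℝ) : Matrix (Fin 2) (Fin 2) ℝ :=
  (metricG Kt η x)⁻¹

/-- `|g|(x,η) = det g(x,η)`. -/
def detG (Kt : ℕ) (η : EtaSpace Kt) (x : Fin 2 → ℝ) : ℝ := (metricG Kt η x).det

/-- The drift `F(x,η) = |g|^{-1/2} ∇_x·(|g|^{1/2} Σ)(x,η)`, divergence taken row-wise. -/
def Fdrift (Kt : ℕ) (η : EtaSpace Kt) (x : Fin 2 → ℝ) : Fin 2 → ℝ := fun i =>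
  (Real.sqrt (detG Kt η x))⁻¹ *
    ∑ j, pd j (fun y => Real.sqrt (detG Kt η y) * SigMat Kt η y i j) x

/-- A function on `ℝ²` that is `ℤ²`-periodic, i.e. a function on the torus `𝕋²`. -/
def ZPeriodic (u : (Fin 2 → ℝ) → ℝ) : Prop :=
  ∀ (x : Fin 2 → ℝ) (m : Fin 2 → ℤ), u (x + fun i => (m i : ℝ)) = u x

/-- The fundamental domain `[0,1]²` of the torus. -/
def unitBox : Set (Fin 2 → ℝ) := Set.Icc 0 1

/-- The generator `L_0(η) u = F·∇_y u + ∑_{i,j} Σ_{ij} ∂_{y_i}∂_{y_j} u`. -/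
def L0 (Kt : ℕ) (η : EtaSpace Kt) (u : (Fin 2 → ℝ) → ℝ) (y : Fin 2 → ℝ) : ℝ :=
  (∑ i, Fdrift Kt η y i * pd i u y) + ∑ i, ∑ j, SigMat Kt η y i j * pd i (pd j u) y

/-- The joint state space `𝕋² × ℝ^{2K}` (with `𝕋²` realized as `ℝ²` and periodicity). -/
abbrev PState (Kt : ℕ) := (Fin 2 → ℝ) × EtaSpace Kt

/-- Partial derivative in the `y`-variable of a function on `𝕋² × ℝ^{2K}`. -/
def pdY (Kt : ℕ) (i : Fin 2) (u : PState Kt → ℝ) (p : PState Kt) : ℝ :=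
  fderiv ℝ (fun y => u (y, p.2)) p.1 (Pi.single i 1)

/-- Partial derivative in the `η`-variable of a function on `𝕋² × ℝ^{2K}`. -/
def pdE (Kt : ℕ) (i : ModeIdx Kt) (u : PState Kt → ℝ) (p : PState Kt) : ℝ :=
  fderiv ℝ (fun η => u (p.1, η)) p.2 (Pi.single i 1)

/-- `L_0` acting on functions on `𝕋² × ℝ^{2K}` (in the `y`-variable). -/
def L0P (Kt : ℕ) (u : PState Kt → ℝ) (p : PState Kt) : ℝ :=
  (∑ i, Fdrift Kt p.2 p.1 i * pdY Kt i u p)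
    + ∑ i, ∑ j, SigMat Kt p.2 p.1 i j * pdY Kt i (pdY Kt j u) p

/-- The Lebesgue adjoint `L_0*(η) u = ∑_{i,j} ∂_{y_i}∂_{y_j}(Σ_{ij} u) − ∇_y·(F u)`. -/
def L0starP (Kt : ℕ) (u : PState Kt → ℝ) (p : PState Kt) : ℝ :=
  (∑ i, ∑ j, pdY Kt i (pdY Kt j fun q => SigMat Kt q.2 q.1 i j * u q) p)
    - ∑ i, pdY Kt i (fun q => Fdrift Kt q.2 q.1 i * u q) p

/-- `L_η` acting on functions on `𝕋² × ℝ^{2K}` (in the `η`-variable). -/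
def LEP (Kt : ℕ) (κ σ : ℝ) (u : PState Kt → ℝ) (p : PState Kt) : ℝ :=
  -(dotProduct ((GammaMat Kt κ σ).mulVec p.2) fun i => pdE Kt i u p)
    + ∑ i, ∑ j, (PiMat Kt κ σ * GammaMat Kt κ σ) i j * pdE Kt i (pdE Kt j u) p

/-- The Lebesgue adjoint `L_η*` acting on functions on `𝕋² × ℝ^{2K}`. -/
def LEstarP (Kt : ℕ) (κ σ : ℝ) (u : PState Kt → ℝ) (p : PState Kt) : ℝ :=
  (∑ i, pdE Kt i (fun q => ((GammaMat Kt κ σ).mulVec q.2) i * u q) p)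
    + ∑ i, ∑ j, (GammaMat Kt κ σ * PiMat Kt κ σ) i j * pdE Kt i (pdE Kt j u) p

/-- The full generator `G = L_0 + L_η`. -/
def GP (Kt : ℕ) (κ σ : ℝ) (u : PState Kt → ℝ) (p : PState Kt) : ℝ :=
  L0P Kt u p + LEP Kt κ σ u p

/-- The Lebesgue adjoint `G* = L_0* + L_η*`. -/
def GstarP (Kt : ℕ) (κ σ : ℝ) (u : PState Kt → ℝ) (p : PState Kt) : ℝ :=
  L0starP Kt u p + LEstarP Kt κ σ u p

-- pd of smooth is smooth
theorem contDiff_pd {ι : Type*} [Fintype ι] [DecidableEq ι] {n m : WithTop ℕ∞} {f : (ι → ℝ) → ℝ}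
    (hf : ContDiff ℝ n f) (hmn : m + 1 ≤ n) (i : ι) : ContDiff ℝ m (pd i f) :=
  (hf.fderiv_right hmn).clm_apply contDiff_const

theorem hFun_contDiff (Kt : ℕ) (η : EtaSpace Kt) : ContDiff ℝ (⊤ : ℕ∞) (hFun Kt η) := by
  unfold hFun
  apply ContDiff.comp Complex.reCLM.contDiff
  apply ContDiff.sum
  intro k _
  apply ContDiff.mul contDiff_const
  apply Complex.contDiff_exp.comp
  apply ContDiff.mul contDiff_const
  exact ((contDiff_const.mul (Complex.ofRealCLM.contDiff.comp (contDiff_apply ℝ ℝ 0))).add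
    (contDiff_const.mul (Complex.ofRealCLM.contDiff.comp (contDiff_apply ℝ ℝ 1))))

theorem gradH_contDiff (Kt : ℕ) (η : EtaSpace Kt) (i : Fin 2) :
    ContDiff ℝ (⊤ : ℕ∞) (fun x => gradH Kt η x i) :=
  contDiff_pd (hFun_contDiff Kt η) (mod_cast le_top) i

theorem detG_eq (Kt : ℕ) (η : EtaSpace Kt) (x : Fin 2 → ℝ) :
    detG Kt η x = 1 + gradH Kt η x 0 ^ 2 + gradH Kt η x 1 ^ 2 := by
  simp [detG, metricG, Matrix.det_fin_two, Matrix.add_apply, Matrix.one_apply]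
  ring

theorem detG_pos (Kt : ℕ) (η : EtaSpace Kt) (x : Fin 2 → ℝ) : 1 ≤ detG Kt η x := by
  rw [detG_eq]; nlinarith [sq_nonneg (gradH Kt η x 0), sq_nonneg (gradH Kt η x 1)]

theorem detG_contDiff (Kt : ℕ) (η : EtaSpace Kt) : ContDiff ℝ (⊤ : ℕ∞) (detG Kt η) := by
  simp only [funext (detG_eq Kt η)]
  exact (contDiff_const.add ((gradH_contDiff Kt η 0).pow 2)).add ((gradH_contDiff Kt η 1).pow 2)

theorem sqrtDetG_contDiff (Kt : ℕ) (η : EtaSpace Kt) :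
    ContDiff ℝ (⊤ : ℕ∞) (fun x => Real.sqrt (detG Kt η x)) := by
  rw [contDiff_iff_contDiffAt]
  intro x
  exact (Real.contDiffAt_sqrt (by linarith [detG_pos Kt η x])).comp x
    (detG_contDiff Kt η).contDiffAt

theorem SigMat_eq (Kt : ℕ) (η : EtaSpace Kt) (x : Fin 2 → ℝ) :
    SigMat Kt η x = (detG Kt η x)⁻¹ •
      !![1 + gradH Kt η x 1 ^ 2, -(gradH Kt η x 0 * gradH Kt η x 1);
         -(gradH Kt η x 0 * gradH Kt η x 1), 1 + gradH Kt η x 0 ^ 2] := by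
  rw [SigMat, Matrix.inv_def, Matrix.adjugate_fin_two]
  rw [Ring.inverse_eq_inv']
  congr 1
  ext i j
  fin_cases i <;> fin_cases j <;>
    simp [metricG, Matrix.add_apply, Matrix.one_apply] <;> ring

theorem SigMat_symm (Kt : ℕ) (η : EtaSpace Kt) (x : Fin 2 → ℝ) (i j : Fin 2) :
    SigMat Kt η x i j = SigMat Kt η x j i := by
  rw [SigMat_eq]
  fin_cases i <;> fin_cases j <;> simp

theorem SigMat_contDiff (Kt : ℕ) (η : EtaSpace Kt) (i j : Fin 2) :
    ContDiff ℝ (⊤ : ℕ∞) (fun x => SigMat Kt η x i j) := by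
  have hinv : ContDiff ℝ (⊤ : ℕ∞) (fun x => (detG Kt η x)⁻¹) := by
    rw [contDiff_iff_contDiffAt]
    intro x
    exact (contDiffAt_inv ℝ (by linarith [detG_pos Kt η x])).comp x
      (detG_contDiff Kt η).contDiffAt
  have h0 := gradH_contDiff Kt η 0
  have h1 := gradH_contDiff Kt η 1
  simp only [funext fun x => SigMat_eq Kt η x]
  fin_cases i <;> fin_cases j <;> simp [Matrix.smul_apply] <;>
    [ exact hinv.mul (contDiff_const.add (h1.pow 2));
      exact (hinv.mul (h0.mul h1)).neg;
      exact (hinv.mul (h0.mul h1)).neg;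
      exact hinv.mul (contDiff_const.add (h0.pow 2))]

theorem pd_add {f g : (Fin 2 → ℝ) → ℝ} {x : Fin 2 → ℝ} (hf : DifferentiableAt ℝ f x)
    (hg : DifferentiableAt ℝ g x) (i : Fin 2) :
    pd i (fun y => f y + g y) x = pd i f x + pd i g x := by
  simp only [pd, fderiv_fun_add hf hg]; rfl

theorem pd_sub {f g : (Fin 2 → ℝ) → ℝ} {x : Fin 2 → ℝ} (hf : DifferentiableAt ℝ f x)
    (hg : DifferentiableAt ℝ g x) (i : Fin 2) :
    pd i (fun y => f y - g y) x = pd i f x - pd i g x := by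
  simp only [pd, fderiv_fun_sub hf hg]; rfl

theorem pd_mul {f g : (Fin 2 → ℝ) → ℝ} {x : Fin 2 → ℝ} (hf : DifferentiableAt ℝ f x)
    (hg : DifferentiableAt ℝ g x) (i : Fin 2) :
    pd i (fun y => f y * g y) x = pd i f x * g x + f x * pd i g x := by
  simp only [pd, fderiv_fun_mul hf hg]
  simp only [ContinuousLinearMap.add_apply, ContinuousLinearMap.smul_apply, smul_eq_mul]
  ring

theorem pd_comp_add (f : (Fin 2 → ℝ) → ℝ) (c : Fin 2 → ℝ) (i : Fin 2) (x : Fin 2 → ℝ) :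
    pd i (fun y => f (y + c)) x = pd i f (x + c) := by
  by_cases hd : DifferentiableAt ℝ f (x + c)
  · have h1 : HasFDerivAt (fun y : Fin 2 → ℝ => y + c) (ContinuousLinearMap.id ℝ _) x :=
      (hasFDerivAt_id x).add_const c
    have h2 : HasFDerivAt (fun y => f (y + c)) (fderiv ℝ f (x + c)) x := by
      have := hd.hasFDerivAt.comp x h1
      exact this
    rw [pd, h2.fderiv]
    rfl
  · have hd2 : ¬ DifferentiableAt ℝ (fun y => f (y + c)) x := by
      intro h
      have h1 : HasFDerivAt (fun z : Fin 2 → ℝ => z - c) (ContinuousLinearMap.id ℝ _) (x + c) :=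
        (hasFDerivAt_id (x + c)).sub_const c
    -- f z = (fun y => f (y + c)) (z - c)
      have hx : DifferentiableAt ℝ (fun y => f (y + c)) (x + c - c) := by simpa using h
      have h3 : DifferentiableAt ℝ ((fun y => f (y + c)) ∘ fun z : Fin 2 → ℝ => z - c)
          (x + c) := DifferentiableAt.comp (x + c) hx (differentiableAt_id.sub_const c)
      simp only [Function.comp_def, sub_add_cancel] at h3
      exact hd h3
    rw [pd, pd, fderiv_zero_of_not_differentiableAt hd, fderiv_zero_of_not_differentiableAt hd2]

theorem ZPeriodic.pd' {f : (Fin 2 → ℝ) → ℝ} (hf : ZPeriodic f) (i : Fin 2) :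
    ZPeriodic (pd i f) := by
  intro x m
  have : (fun y => f (y + fun j => (m j : ℝ))) = f := funext fun y => hf y m
  rw [← pd_comp_add f (fun j => (m j : ℝ)) i x, this]

theorem hFun_periodic (Kt : ℕ) (η : EtaSpace Kt) : ZPeriodic (hFun Kt η) := by
  intro x m
  unfold hFun
  congr 1
  apply Finset.sum_congr rfl
  intro k _
  congr 1
  simp only [Pi.add_apply]
  push_cast
  rw [show (2 * (π : ℂ) * Complex.I * ((k.1.1 : ℂ) * ((x 0 : ℂ) + (m 0 : ℂ))
      + (k.1.2 : ℂ) * ((x 1 : ℂ) + (m 1 : ℂ))))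
    = 2 * (π : ℂ) * Complex.I * ((k.1.1 : ℂ) * (x 0 : ℂ) + (k.1.2 : ℂ) * (x 1 : ℂ))
      + ((k.1.1 * m 0 + k.1.2 * m 1 : ℤ) : ℂ) * (2 * (π : ℂ) * Complex.I) by push_cast; ring]
  rw [Complex.exp_add, Complex.exp_int_mul_two_pi_mul_I, mul_one]

theorem gradH_periodic (Kt : ℕ) (η : EtaSpace Kt) (i : Fin 2) :
    ZPeriodic (fun x => gradH Kt η x i) :=
  (hFun_periodic Kt η).pd' i

theorem detG_periodic (Kt : ℕ) (η : EtaSpace Kt) : ZPeriodic (detG Kt η) := by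
  intro x m
  have h0 := gradH_periodic Kt η 0 x m
  have h1 := gradH_periodic Kt η 1 x m
  simp only at h0 h1
  rw [detG_eq, detG_eq, h0, h1]

theorem SigMat_periodic (Kt : ℕ) (η : EtaSpace Kt) (i j : Fin 2) :
    ZPeriodic (fun x => SigMat Kt η x i j) := by
  intro x m
  have h0 := gradH_periodic Kt η 0 x m
  have h1 := gradH_periodic Kt η 1 x m
  have hd := detG_periodic Kt η x m
  simp only at h0 h1
  simp only [SigMat_eq, h0, h1, hd]

theorem insertNth_one_eq (i : Fin 2) (x : Fin 1 → ℝ) :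
    i.insertNth 1 x = i.insertNth 0 x + fun j => ((Pi.single i (1 : ℤ) : Fin 2 → ℤ) j : ℝ) := by
  funext j
  refine Fin.succAboveCases i ?_ ?_ j
  · simp
  · intro k
    simp [Fin.insertNth_apply_succAbove, Pi.single_eq_of_ne (Fin.succAbove_ne i k)]

theorem div_integral_zero (V : Fin 2 → (Fin 2 → ℝ) → ℝ)
    (hsm : ∀ i, ContDiff ℝ 1 (V i)) (hper : ∀ i, ZPeriodic (V i)) :
    ∫ x in unitBox, ∑ i, pd i (V i) x = 0 := by
  have key := MeasureTheory.integral_divergence_of_hasFDerivAt_off_countable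
    (a := (0 : Fin 2 → ℝ)) (b := (1 : Fin 2 → ℝ)) (n := 1)
    (zero_le_one)
    (fun x i => V i x)
    (fun x => ContinuousLinearMap.pi fun i => fderiv ℝ (V i) x)
    ∅ Set.countable_empty
    (Continuous.continuousOn (continuous_pi fun i => (hsm i).continuous))
    (fun x _ => by
      rw [hasFDerivAt_pi']
      intro i
      simpa using ((hsm i).differentiable one_ne_zero x).hasFDerivAt)
    (by
      apply ContinuousOn.integrableOn_compact isCompact_Icc
      apply Continuous.continuousOn
      apply continuous_finset_sum
      intro i _
      have h1 : Continuous fun x => fderiv ℝ (V i) x :=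
        (contDiff_one_iff_fderiv.mp (hsm i)).2
      exact h1.clm_apply continuous_const)
  have hfaces : ∀ i : Fin 2,
      ((∫ x in Set.Icc ((0 : Fin 2 → ℝ) ∘ i.succAbove) ((1 : Fin 2 → ℝ) ∘ i.succAbove),
          V i (i.insertNth ((1 : Fin 2 → ℝ) i) x)) -
        ∫ x in Set.Icc ((0 : Fin 2 → ℝ) ∘ i.succAbove) ((1 : Fin 2 → ℝ) ∘ i.succAbove),
          V i (i.insertNth ((0 : Fin 2 → ℝ) i) x)) = 0 := by
    intro i
    rw [sub_eq_zero]
    apply integral_congr_ae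
    filter_upwards with x
    have : (1 : Fin 2 → ℝ) i = 1 := rfl
    rw [this, show (0 : Fin 2 → ℝ) i = 0 from rfl, insertNth_one_eq]
    exact hper i (i.insertNth 0 x) _
  have : ∀ x, (∑ i, (ContinuousLinearMap.pi fun i => fderiv ℝ (V i) x)
      (Pi.single i 1) i) = ∑ i : Fin 2, pd i (V i) x := by
    intro x
    apply Finset.sum_congr rfl
    intro i _
    rfl
  rw [show unitBox = Set.Icc (0 : Fin 2 → ℝ) 1 from rfl]
  calc ∫ x in Set.Icc (0 : Fin 2 → ℝ) 1, ∑ i, pd i (V i) x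
      = ∫ x in Set.Icc (0 : Fin 2 → ℝ) 1,
          ∑ i, (ContinuousLinearMap.pi fun i => fderiv ℝ (V i) x) (Pi.single i 1) i := by
        apply integral_congr_ae; filter_upwards with x; rw [this x]
    _ = 0 := by rw [key]; exact Finset.sum_eq_zero fun i _ => hfaces i

/-- flux component -/
def Gf (Kt : ℕ) (η : EtaSpace Kt) (p q : Fin 2) : (Fin 2 → ℝ) → ℝ :=
  fun y => Real.sqrt (detG Kt η y) * SigMat Kt η y p q

theorem Gf_contDiff (Kt : ℕ) (η : EtaSpace Kt) (p q : Fin 2) : ContDiff ℝ (⊤ : ℕ∞) (Gf Kt η p q) :=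
  (sqrtDetG_contDiff Kt η).mul (SigMat_contDiff Kt η p q)

theorem Gf_symm (Kt : ℕ) (η : EtaSpace Kt) (p q : Fin 2) : Gf Kt η p q = Gf Kt η q p :=
  funext fun y => by rw [Gf, Gf, SigMat_symm]

theorem Gf_periodic (Kt : ℕ) (η : EtaSpace Kt) (p q : Fin 2) : ZPeriodic (Gf Kt η p q) := by
  intro x m
  have h := SigMat_periodic Kt η p q x m
  simp only at h
  simp only [Gf, detG_periodic Kt η x m, h]

theorem Fdrift_eq (Kt : ℕ) (η : EtaSpace Kt) (x : Fin 2 → ℝ) (i : Fin 2) :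
    Fdrift Kt η x i = (Real.sqrt (detG Kt η x))⁻¹ * ∑ j, pd j (Gf Kt η i j) x := rfl

/-- Green flux field for a pair of functions. -/
def Wf (Kt : ℕ) (η : EtaSpace Kt) (a b : (Fin 2 → ℝ) → ℝ) (i : Fin 2) :
    (Fin 2 → ℝ) → ℝ :=
  fun y => Gf Kt η i 0 y * (a y * pd 0 b y - b y * pd 0 a y)
         + Gf Kt η i 1 y * (a y * pd 1 b y - b y * pd 1 a y)

theorem green_identity (Kt : ℕ) (η : EtaSpace Kt) {a b : (Fin 2 → ℝ) → ℝ}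
    (ha : ContDiff ℝ 2 a) (hb : ContDiff ℝ 2 b) (x : Fin 2 → ℝ) :
    ∑ i, pd i (Wf Kt η a b i) x =
      Real.sqrt (detG Kt η x) * (a x * L0 Kt η b x - b x * L0 Kt η a x) := by
  have hs : Real.sqrt (detG Kt η x) ≠ 0 :=
    ne_of_gt (Real.sqrt_pos.mpr (by linarith [detG_pos Kt η x]))
  have hGfd : ∀ p q : Fin 2, DifferentiableAt ℝ (Gf Kt η p q) x := fun p q =>
    ((Gf_contDiff Kt η p q).differentiable (by simp)).differentiableAt
  have had : DifferentiableAt ℝ a x := (ha.differentiable (by norm_num)).differentiableAt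
  have hbd : DifferentiableAt ℝ b x := (hb.differentiable (by norm_num)).differentiableAt
  have hpda : ∀ l : Fin 2, DifferentiableAt ℝ (pd l a) x := fun l =>
    ((contDiff_pd (m := 1) ha (by norm_num) l).differentiable one_ne_zero).differentiableAt
  have hpdb : ∀ l : Fin 2, DifferentiableAt ℝ (pd l b) x := fun l =>
    ((contDiff_pd (m := 1) hb (by norm_num) l).differentiable one_ne_zero).differentiableAt
  have hexp : ∀ (p l i : Fin 2),
      pd i (fun y => Gf Kt η p l y * (a y * pd l b y - b y * pd l a y)) x
        = pd i (Gf Kt η p l) x * (a x * pd l b x - b x * pd l a x)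
          + Gf Kt η p l x * ((pd i a x * pd l b x + a x * pd i (pd l b) x)
            - (pd i b x * pd l a x + b x * pd i (pd l a) x)) := by
    intro p l i
    rw [pd_mul (hGfd p l) ((had.fun_mul (hpdb l)).fun_sub (hbd.fun_mul (hpda l))) i,
      pd_sub (had.fun_mul (hpdb l)) (hbd.fun_mul (hpda l)) i,
      pd_mul had (hpdb l) i, pd_mul hbd (hpda l) i]
  have hW : ∀ i : Fin 2, pd i (Wf Kt η a b i) x
      = pd i (fun y => Gf Kt η i 0 y * (a y * pd 0 b y - b y * pd 0 a y)) x
        + pd i (fun y => Gf Kt η i 1 y * (a y * pd 1 b y - b y * pd 1 a y)) x := by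
    intro i
    exact pd_add ((hGfd i 0).mul ((had.mul (hpdb 0)).sub (hbd.mul (hpda 0))))
      ((hGfd i 1).mul ((had.mul (hpdb 1)).sub (hbd.mul (hpda 1)))) i
  have hsymGf10 : Gf Kt η 1 0 = Gf Kt η 0 1 := Gf_symm Kt η 1 0
  have hsymS : SigMat Kt η x 1 0 = SigMat Kt η x 0 1 := SigMat_symm Kt η x 1 0
  have hGfval : ∀ p q : Fin 2, Gf Kt η p q x = Real.sqrt (detG Kt η x) * SigMat Kt η x p q :=
    fun p q => rfl
  simp only [Fin.sum_univ_two, hW, hexp, L0, Fdrift_eq, Fin.sum_univ_two, hsymGf10, hsymS,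
    hGfval]
  field_simp
  ring

theorem Wf_contDiff (Kt : ℕ) (η : EtaSpace Kt) {a b : (Fin 2 → ℝ) → ℝ}
    (ha : ContDiff ℝ 2 a) (hb : ContDiff ℝ 2 b) (i : Fin 2) :
    ContDiff ℝ 1 (Wf Kt η a b i) := by
  have ha1 : ContDiff ℝ 1 a := ha.of_le (by norm_num)
  have hb1 : ContDiff ℝ 1 b := hb.of_le (by norm_num)
  have hpda : ∀ l : Fin 2, ContDiff ℝ 1 (pd l a) := fun l => contDiff_pd ha (by norm_num) l
  have hpdb : ∀ l : Fin 2, ContDiff ℝ 1 (pd l b) := fun l => contDiff_pd hb (by norm_num) l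
  have hGf : ∀ p q : Fin 2, ContDiff ℝ 1 (Gf Kt η p q) := fun p q =>
    (Gf_contDiff Kt η p q).of_le (mod_cast le_top)
  exact ((hGf i 0).mul ((ha1.mul (hpdb 0)).sub (hb1.mul (hpda 0)))).add
    ((hGf i 1).mul ((ha1.mul (hpdb 1)).sub (hb1.mul (hpda 1))))

theorem Wf_periodic (Kt : ℕ) (η : EtaSpace Kt) {a b : (Fin 2 → ℝ) → ℝ}
    (hpa : ZPeriodic a) (hpb : ZPeriodic b) (i : Fin 2) :
    ZPeriodic (Wf Kt η a b i) := by
  intro x m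
  have h0 := Gf_periodic Kt η i 0 x m
  have h1 := Gf_periodic Kt η i 1 x m
  have ha := hpa x m
  have hb := hpb x m
  have hpa0 := hpa.pd' 0 x m
  have hpa1 := hpa.pd' 1 x m
  have hpb0 := hpb.pd' 0 x m
  have hpb1 := hpb.pd' 1 x m
  simp only [Wf, h0, h1, ha, hb, hpa0, hpa1, hpb0, hpb1]

theorem inner_integral_zero (Kt : ℕ) (η : EtaSpace Kt) {a b : (Fin 2 → ℝ) → ℝ}
    (ha : ContDiff ℝ 2 a) (hb : ContDiff ℝ 2 b)
    (hpa : ZPeriodic a) (hpb : ZPeriodic b) :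
    ∫ x in unitBox, Real.sqrt (detG Kt η x) * (a x * L0 Kt η b x - b x * L0 Kt η a x) = 0 := by
  have h := div_integral_zero (Wf Kt η a b) (Wf_contDiff Kt η ha hb)
    (Wf_periodic Kt η hpa hpb)
  rw [← h]
  apply integral_congr_ae
  filter_upwards with x
  exact (green_identity Kt η ha hb x).symm

/-- Let `χ = (χ¹,χ²)` be continuous, `C²` in `y`, solving the Poisson
equations `L_0(η)χ^i(·,η) = −F^i(·,η)` on `𝕋²` for every `η`, with polynomial growth
`|χ(y,η)| ≤ C(1+|η|^m)`. Then the Stratonovich area-correction matrix vanishes: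
`Ã(i,j) = ∫∫ (χ^i F^j − F^i χ^j) dρ_Y dρ_η = 0`. -/
theorem stratonovich_area_correction_vanishes (Kt : ℕ) (κ σ : ℝ) (hκ : 0 < κ) (hσ : 0 < σ)
    (χ : PState Kt → Fin 2 → ℝ) (hcont : Continuous χ)
    (hC2 : ∀ (η : EtaSpace Kt) (i : Fin 2), ContDiff ℝ 2 fun y => χ (y, η) i)
    (hper : ∀ (η : EtaSpace Kt) (i : Fin 2), ZPeriodic fun y => χ (y, η) i)
    (hPoisson : ∀ (η : EtaSpace Kt) (i : Fin 2) (y : Fin 2 → ℝ),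
      L0 Kt η (fun y' => χ (y', η) i) y = -Fdrift Kt η y i)
    (C m : ℝ) (hCpos : 0 < C) (hmpos : 0 < m)
    (hgrowth : ∀ p : PState Kt, euclNorm (χ p) ≤ C * (1 + euclNorm p.2 ^ m)) :
    ∀ i j : Fin 2,
      ∫ η, (∫ y in unitBox,
            (χ (y, η) i * Fdrift Kt η y j - Fdrift Kt η y i * χ (y, η) j) *
              Real.sqrt (detG Kt η y)) / (∫ y in unitBox, Real.sqrt (detG Kt η y))
          ∂(rhoEta Kt κ σ) = 0 := by
  intro i j
  have hnum : ∀ η : EtaSpace Kt,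
      (∫ y in unitBox,
        (χ (y, η) i * Fdrift Kt η y j - Fdrift Kt η y i * χ (y, η) j) *
          Real.sqrt (detG Kt η y)) = 0 := by
    intro η
    have hkey := inner_integral_zero Kt η (hC2 η i) (hC2 η j) (hper η i) (hper η j)
    have hpt : ∀ y : Fin 2 → ℝ,
        (χ (y, η) i * Fdrift Kt η y j - Fdrift Kt η y i * χ (y, η) j) *
            Real.sqrt (detG Kt η y)
          = -(Real.sqrt (detG Kt η y) *
              ((fun y' => χ (y', η) i) y * L0 Kt η (fun y' => χ (y', η) j) y -
                (fun y' => χ (y', η) j) y * L0 Kt η (fun y' => χ (y', η) i) y)) := by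
      intro y
      have hi' := hPoisson η i y
      have hj' := hPoisson η j y
      simp only
      rw [show Fdrift Kt η y j = -(L0 Kt η (fun y' => χ (y', η) j) y) by
            rw [hj']; ring,
          show Fdrift Kt η y i = -(L0 Kt η (fun y' => χ (y', η) i) y) by
            rw [hi']; ring]
      ring
    calc (∫ y in unitBox,
          (χ (y, η) i * Fdrift Kt η y j - Fdrift Kt η y i * χ (y, η) j) *
            Real.sqrt (detG Kt η y))
        = ∫ y in unitBox, -(Real.sqrt (detG Kt η y) *
            ((fun y' => χ (y', η) i) y * L0 Kt η (fun y' => χ (y', η) j) y -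
              (fun y' => χ (y', η) j) y * L0 Kt η (fun y' => χ (y', η) i) y)) := by
          apply integral_congr_ae; filter_upwards with y; exact hpt y
      _ = -(∫ y in unitBox, Real.sqrt (detG Kt η y) *
            ((fun y' => χ (y', η) i) y * L0 Kt η (fun y' => χ (y', η) j) y -
              (fun y' => χ (y', η) j) y * L0 Kt η (fun y' => χ (y', η) i) y)) :=
          integral_neg _
      _ = 0 := by rw [hkey, neg_zero]
  have hfun : (fun η : EtaSpace Kt =>
      (∫ y in unitBox,
          (χ (y, η) i * Fdrift Kt η y j - Fdrift Kt η y i * χ (y, η) j) *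
            Real.sqrt (detG Kt η y)) / (∫ y in unitBox, Real.sqrt (detG Kt η y)))
      = fun _ => (0 : ℝ) := by
    funext η
    rw [hnum η, zero_div]
  rw [hfun, integral_zero]

end
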